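/- Let f, g : ℤ → ℂ be sequences (Fourier coefficients) with f ∈ ℓ² and ⟨·⟩^{1/2+a} g ∈ ℓ² for some a > 1/2. Define the convolution h(m) = Σ_{k+l=m} (⟨k+l⟩^{1/2} − ⟨k⟩^{1/2}) f(k) g(l). Then Σ_m |h(m)|² ≤ C · (Σ_k |f(k)|²) · (Σ_l ⟨l⟩^{1+2a} |g(l)|²) for a constant C depending only on a. -/

import Mathlib

/-!
The symbol `σ(x) = ⟨x⟩^{1/2}` satisfies `|σ(m) - σ(k)| ≤ σ(m - k)`, because `x ↦ ⟨x⟩` is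
`1`-Lipschitz and `√` is `1/2`-Hölder. So `|h(m)| ≤ ∑ₖ |f k| σ(m - k) |g (m - k)|`, and
Cauchy–Schwarz against the weight `⟨m - k⟩^{2a}` bounds `|h(m)|²` by
`S · ∑ₖ |f k|² ⟨m - k⟩^{1+2a} |g (m - k)|²` with `S = ∑ₗ ⟨l⟩^{-2a}`, finite since `2a > 1`.
Summing over `m` factors the double sum, so `C = S`.
-/

theorem Real.abs_sqrt_sub_sqrt_le_sqrt_abs_sub {u v : ℝ} (hu : 0 ≤ u) (hv : 0 ≤ v) :
    |√u - √v| ≤ √|u - v| := by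
  refine Real.abs_le_sqrt ?_
  have hdiff : (√u - √v) * (√u + √v) = u - v := by
    rw [mul_comm, ← sq_sub_sq, Real.sq_sqrt hu, Real.sq_sqrt hv]
  calc (√u - √v) ^ 2 = |√u - √v| * |√u - √v| := by rw [abs_mul_abs_self, sq]
    _ ≤ |√u - √v| * |√u + √v| := by
        refine mul_le_mul_of_nonneg_left ?_ (abs_nonneg _)
        rw [abs_of_nonneg (add_nonneg (Real.sqrt_nonneg u) (Real.sqrt_nonneg v)), abs_sub_le_iff]
        constructor <;> linarith [Real.sqrt_nonneg u, Real.sqrt_nonneg v]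
    _ = |u - v| := by rw [← abs_mul, hdiff]

open Complex in
theorem abs_sqrt_one_add_sq_sub_sqrt_one_add_sq_le (x y : ℝ) :
    |√(1 + x ^ 2) - √(1 + y ^ 2)| ≤ |x - y| := by
  have hnorm (t : ℝ) : √(1 + t ^ 2) = ‖((1 : ℝ) : ℂ) + t * I‖ := by rw [norm_add_mul_I, one_pow]
  rw [hnorm, hnorm]
  refine (abs_norm_sub_norm_le _ _).trans_eq ?_
  rw [add_sub_add_left_eq_sub, ← sub_mul, norm_mul, norm_I, mul_one, ← ofReal_sub, norm_real,
    Real.norm_eq_abs]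

/-- `⟨x⟩^{1/2}` with `⟨x⟩ = (1 + x²)^{1/2}`, spelled exactly as in the theorem. -/
noncomputable def halfBracket (x : ℝ) : ℝ := ((1 + x ^ 2) ^ ((1 : ℝ) / 2)) ^ ((1 : ℝ) / 2)

theorem halfBracket_eq_sqrt_sqrt (x : ℝ) : halfBracket x = √√(1 + x ^ 2) := by
  simp only [halfBracket, Real.sqrt_eq_rpow]

theorem halfBracket_nonneg (x : ℝ) : 0 ≤ halfBracket x := by
  rw [halfBracket_eq_sqrt_sqrt]; positivity

theorem sq_halfBracket (x : ℝ) : halfBracket x ^ 2 = (1 + x ^ 2) ^ ((1 : ℝ) / 2) := by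
  rw [halfBracket_eq_sqrt_sqrt, Real.sq_sqrt (Real.sqrt_nonneg _), Real.sqrt_eq_rpow]

theorem abs_halfBracket_sub_le (x y : ℝ) :
    |halfBracket x - halfBracket y| ≤ halfBracket (x - y) := by
  simp only [halfBracket_eq_sqrt_sqrt]
  calc _ ≤ √|√(1 + x ^ 2) - √(1 + y ^ 2)| :=
        Real.abs_sqrt_sub_sqrt_le_sqrt_abs_sub (Real.sqrt_nonneg _) (Real.sqrt_nonneg _)
    _ ≤ √|x - y| := Real.sqrt_le_sqrt (abs_sqrt_one_add_sq_sub_sqrt_one_add_sq_le x y)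
    _ ≤ √√(1 + (x - y) ^ 2) := Real.sqrt_le_sqrt (Real.abs_le_sqrt (by linarith))

theorem summable_one_add_sq_rpow_neg {a : ℝ} (ha : 1 / 2 < a) :
    Summable fun l : ℤ => (1 + (l : ℝ) ^ 2) ^ (-a) := by
  refine (Real.summable_abs_int_rpow (b := 2 * a) (by linarith)).of_norm_bounded_eventually ?_
  filter_upwards [Filter.eventually_cofinite_ne 0] with l hl
  have hl_pos : 0 < |(l : ℝ)| := abs_pos.2 (Int.cast_ne_zero.2 hl)
  rw [Real.norm_of_nonneg (by positivity)]
  calc (1 + (l : ℝ) ^ 2) ^ (-a) ≤ (|(l : ℝ)| ^ (2 : ℝ)) ^ (-a) :=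
        Real.rpow_le_rpow_of_nonpos (by positivity) (by rw [Real.rpow_two, sq_abs]; linarith)
          (by linarith)
    _ = |(l : ℝ)| ^ (-(2 * a)) := by rw [← Real.rpow_mul hl_pos.le]; ring_nf

theorem summable_and_sq_tsum_le_tsum_inv_mul_tsum_mul_sq {ι : Type*} {w F : ι → ℝ}
    (hw : ∀ i, 0 < w i) (hF : ∀ i, 0 ≤ F i) (hw_sum : Summable fun i => (w i)⁻¹)
    (hwF : Summable fun i => w i * F i ^ 2) :
    Summable F ∧ (∑' i, F i) ^ 2 ≤ (∑' i, (w i)⁻¹) * ∑' i, w i * F i ^ 2 := by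
  have hinv (i : ι) : √(w i)⁻¹ ^ (2 : ℝ) = (w i)⁻¹ := by
    rw [Real.rpow_two, Real.sq_sqrt (inv_nonneg.2 (hw i).le)]
  have hmul (i : ι) : (√(w i) * F i) ^ (2 : ℝ) = w i * F i ^ 2 := by
    rw [Real.rpow_two, mul_pow, Real.sq_sqrt (hw i).le]
  have hsplit (i : ι) : √(w i)⁻¹ * (√(w i) * F i) = F i := by
    rw [← mul_assoc, ← Real.sqrt_mul (inv_nonneg.2 (hw i).le), inv_mul_cancel₀ (hw i).ne',
      Real.sqrt_one, one_mul]
  obtain ⟨hsum, hle⟩ := Real.summable_and_inner_le_Lp_mul_Lq_tsum_of_nonneg (p := 2) (q := 2)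
    (f := fun i => √(w i)⁻¹) (g := fun i => √(w i) * F i) .two_two
    (fun i => Real.sqrt_nonneg _) (fun i => mul_nonneg (Real.sqrt_nonneg _) (hF i))
    (by simpa only [hinv] using hw_sum) (by simpa only [hmul] using hwF)
  simp only [hsplit, hinv, hmul, ← Real.sqrt_eq_rpow] at hsum hle
  refine ⟨hsum, ?_⟩
  calc (∑' i, F i) ^ 2 ≤ (√(∑' i, (w i)⁻¹) * √(∑' i, w i * F i ^ 2)) ^ 2 :=
        pow_le_pow_left₀ (tsum_nonneg hF) hle 2
    _ = (∑' i, (w i)⁻¹) * ∑' i, w i * F i ^ 2 := by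
        rw [mul_pow, Real.sq_sqrt (tsum_nonneg fun i => (inv_pos.2 (hw i)).le),
          Real.sq_sqrt (tsum_nonneg fun i => mul_nonneg (hw i).le (sq_nonneg _))]

section Convolution

variable {G : Type*} [AddCommGroup G] {F H : G → ℝ}

theorem summable_prod_mul_comp_sub (hF : Summable F) (hH : Summable H) (hF0 : 0 ≤ F)
    (hH0 : 0 ≤ H) : Summable fun p : G × G => F p.2 * H (p.1 - p.2) :=
  ((Equiv.prodComm G G).trans ((Equiv.refl G).prodShear Equiv.subRight)).summable_iff.2
    (hF.mul_of_nonneg hH hF0 hH0)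

theorem summable_mul_comp_sub (hF : Summable F) (hH : Summable H) (hF0 : 0 ≤ F)
    (hH0 : 0 ≤ H) (m : G) : Summable fun k => F k * H (m - k) :=
  (summable_prod_mul_comp_sub hF hH hF0 hH0).prod_factor m

theorem hasSum_tsum_mul_comp_sub (hF : Summable F) (hH : Summable H) (hF0 : 0 ≤ F)
    (hH0 : 0 ≤ H) : HasSum (fun m => ∑' k, F k * H (m - k)) ((∑' k, F k) * ∑' l, H l) := by
  refine HasSum.prod_fiberwise (f := fun p : G × G => F p.2 * H (p.1 - p.2)) ?_
    fun m => (summable_mul_comp_sub hF hH hF0 hH0 m).hasSum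
  rw [hF.tsum_mul_tsum hH (hF.mul_of_nonneg hH hF0 hH0),
    ← ((Equiv.prodComm G G).trans ((Equiv.refl G).prodShear Equiv.subRight)).tsum_eq]
  exact (summable_prod_mul_comp_sub hF hH hF0 hH0).hasSum

end Convolution

theorem sq_norm_tsum_halfBracket_commutator_le {a : ℝ} (ha : 1 / 2 < a) {f g : ℤ → ℂ}
    (hf : Summable fun k => ‖f k‖ ^ 2)
    (hg : Summable fun l : ℤ => (1 + (l : ℝ) ^ 2) ^ ((1 + 2 * a) / 2) * ‖g l‖ ^ 2) (m : ℤ) :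
    ‖∑' k : ℤ, ((halfBracket m - halfBracket k : ℝ) : ℂ) * f k * g (m - k)‖ ^ 2 ≤
      (∑' l : ℤ, (1 + (l : ℝ) ^ 2) ^ (-a)) *
        ∑' k : ℤ, ‖f k‖ ^ 2 *
          ((1 + ((m - k : ℤ) : ℝ) ^ 2) ^ ((1 + 2 * a) / 2) * ‖g (m - k)‖ ^ 2) := by
  set w : ℤ → ℝ := fun k => (1 + ((m - k : ℤ) : ℝ) ^ 2) ^ a
  set F : ℤ → ℝ := fun k => ‖f k‖ * (halfBracket (m - k : ℤ) * ‖g (m - k)‖)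
  have hw (k : ℤ) : 0 < w k := by positivity
  have hwF (k : ℤ) : w k * F k ^ 2 =
      ‖f k‖ ^ 2 * ((1 + ((m - k : ℤ) : ℝ) ^ 2) ^ ((1 + 2 * a) / 2) * ‖g (m - k)‖ ^ 2) := by
    simp only [w, F, mul_pow, sq_halfBracket]
    rw [show (1 + 2 * a) / 2 = a + 1 / 2 by ring, Real.rpow_add (by positivity)]
    ring
  have hS : HasSum (fun k => (w k)⁻¹) (∑' l : ℤ, (1 + (l : ℝ) ^ 2) ^ (-a)) := by
    have hshift : (fun k => (w k)⁻¹) =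
        (fun l : ℤ => (1 + (l : ℝ) ^ 2) ^ (-a)) ∘ Equiv.subLeft m :=
      funext fun k => (Real.rpow_neg (by positivity) a).symm
    rw [hshift]
    exact (Equiv.subLeft m).hasSum_iff.2 (summable_one_add_sq_rpow_neg ha).hasSum
  obtain ⟨hF, hCS⟩ := summable_and_sq_tsum_le_tsum_inv_mul_tsum_mul_sq (F := F) hw
    (fun k => by have := halfBracket_nonneg (m - k : ℤ); positivity) hS.summable
    (by simpa only [hwF] using
      summable_mul_comp_sub hf hg (fun k => by positivity) (fun l => by positivity) m)
  have hterm (k : ℤ) : ‖((halfBracket m - halfBracket k : ℝ) : ℂ) * f k * g (m - k)‖ ≤ F k := by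
    have hsymbol : |halfBracket m - halfBracket k| ≤ halfBracket (m - k : ℤ) := by
      rw [Int.cast_sub]; exact abs_halfBracket_sub_le _ _
    rw [norm_mul, norm_mul, Complex.norm_real, Real.norm_eq_abs]
    calc _ ≤ halfBracket (m - k : ℤ) * ‖f k‖ * ‖g (m - k)‖ := by gcongr
      _ = F k := by ring
  have hterm_summable := Summable.of_nonneg_of_le (fun _ => norm_nonneg _) hterm hF
  calc _ ≤ (∑' k, F k) ^ 2 := pow_le_pow_left₀ (norm_nonneg _)
        ((norm_tsum_le_tsum_norm hterm_summable).trans (hterm_summable.tsum_le_tsum hterm hF)) 2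
    _ ≤ _ := hCS
    _ = _ := by simp only [hS.tsum_eq, hwF]

/-- Commutator estimate at the level of Fourier coefficients:
for `a > 1/2`, with `h m = ∑_{k+l=m} (⟨k+l⟩^{1/2} − ⟨k⟩^{1/2}) f k g l`,
one has `∑ |h m|² ≤ C (∑ |f k|²) (∑ ⟨l⟩^{1+2a} |g l|²)`. -/
theorem commutator_half_bracket_estimate (a : ℝ) (ha : 1 / 2 < a) :
    ∃ C : ℝ, 0 < C ∧ ∀ f g : ℤ → ℂ,
      Summable (fun k : ℤ => ‖f k‖ ^ 2) →
      Summable (fun l : ℤ => ((1 + (l : ℝ) ^ 2) ^ ((1 + 2 * a) / 2)) * ‖g l‖ ^ 2) →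
      ∑' m : ℤ, ‖∑' k : ℤ,
          ((((1 + (m : ℝ) ^ 2) ^ ((1 : ℝ) / 2)) ^ ((1 : ℝ) / 2)
            - ((1 + (k : ℝ) ^ 2) ^ ((1 : ℝ) / 2)) ^ ((1 : ℝ) / 2) : ℝ) : ℂ)
            * f k * g (m - k)‖ ^ 2
        ≤ C * (∑' k : ℤ, ‖f k‖ ^ 2)
            * (∑' l : ℤ, ((1 + (l : ℝ) ^ 2) ^ ((1 + 2 * a) / 2)) * ‖g l‖ ^ 2) := by
  have hS := summable_one_add_sq_rpow_neg ha
  refine ⟨_, hS.tsum_pos (fun l => by positivity) 0 (by positivity), fun f g hf hg => ?_⟩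
  have hconv := hasSum_tsum_mul_comp_sub hf hg (fun k => by positivity) (fun l => by positivity)
  have hpoint := sq_norm_tsum_halfBracket_commutator_le ha hf hg
  rw [mul_assoc, ← hconv.tsum_eq, ← tsum_mul_left]
  exact Summable.tsum_le_tsum hpoint
    (.of_nonneg_of_le (fun m => by positivity) hpoint (hconv.summable.mul_left _))
    (hconv.summable.mul_left _)
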